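/- Let μ, λ ∈ Λ_N with λ_1 ≤ m and μ_1 ≤ m. Then μ ⪯ λ if and only if μ ⊂ λ and λ′_i ≤ μ′_i + 2 for all 1 ≤ i ≤ m, where λ′, μ′ ∈ Λ_m are the conjugate partitions. -/

import Mathlib

open Finset

/-- `l` is a partition with at most `N` parts: `l 1 ≥ l 2 ≥ ⋯ ≥ l N (≥ 0)`. -/
def IsPartition {N : ℕ} (l : Fin N → ℕ) : Prop :=
  ∀ i j : Fin N, i ≤ j → l j ≤ l i

/-- Containment of diagrams: `μ ⊂ l`. -/
def SubDiag {N : ℕ} (μ l : Fin N → ℕ) : Prop := ∀ j, μ j ≤ l j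

/-- The weight `|l| = l 1 + ⋯ + l N`. -/
def wt {N : ℕ} (l : Fin N → ℕ) : ℕ := ∑ j, l j

/-- The skew diagram `l/μ` is a vertical strip: `μ j ≤ l j ≤ μ j + 1` for all `j`. -/
def VStrip {N : ℕ} (l μ : Fin N → ℕ) : Prop :=
  ∀ j, μ j ≤ l j ∧ l j ≤ μ j + 1

/-- The skew diagram `l/μ` is a horizontal strip:
`l 1 ≥ μ 1 ≥ l 2 ≥ μ 2 ≥ ⋯ ≥ l N ≥ μ N` (interlacing). -/
def HStrip {N : ℕ} (l μ : Fin N → ℕ) : Prop :=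
  (∀ j, μ j ≤ l j) ∧ ∀ (j : ℕ) (h : j + 1 < N), l ⟨j + 1, h⟩ ≤ μ ⟨j, by omega⟩

/-- `|l/μ| = |l| - |μ|` (for `μ ⊂ l`). -/
def skewWt {N : ℕ} (l μ : Fin N → ℕ) : ℕ := ∑ j, (l j - μ j)

/-- The proximity relation `μ ∼_r l`: there is a partition `ν ⊂ l, ν ⊂ μ` such that
`l/ν` and `μ/ν` are vertical strips with `|l/ν| + |μ/ν| ≤ r`. -/
def simRel {N : ℕ} (r : ℕ) (μ l : Fin N → ℕ) : Prop :=
  ∃ ν : Fin N → ℕ, IsPartition ν ∧ SubDiag ν l ∧ SubDiag ν μ ∧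
    VStrip l ν ∧ VStrip μ ν ∧ skewWt l ν + skewWt μ ν ≤ r

/-- `μ ⪯ l`: there is a partition `ν` with `μ ⊂ ν ⊂ l` such that `l/ν` and `ν/μ`
are horizontal strips. -/
def preceq {N : ℕ} (μ l : Fin N → ℕ) : Prop :=
  ∃ ν : Fin N → ℕ, IsPartition ν ∧ SubDiag μ ν ∧ SubDiag ν l ∧
    HStrip l ν ∧ HStrip ν μ

/-- The conjugate partition `l′ ∈ Λ_m` (for `l ∈ Λ_N` with `l 1 ≤ m`):
`l′ i = #{j : l j ≥ i}` (here `i : Fin m` is 0-based, so `i+1`-th row). -/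
def conjP {N : ℕ} (m : ℕ) (l : Fin N → ℕ) : Fin m → ℕ :=
  fun i => (Finset.univ.filter (fun j : Fin N => (i : ℕ) + 1 ≤ l j)).card

/-- The rectangular partition `m^N ∈ Λ_N`. -/
def rectP (m N : ℕ) : Fin N → ℕ := fun _ => m

/-- The complement `m^N − l` of `l ⊂ m^N` in `Λ_N`: `(m^N − l) j = m − l (N+1−j)`
(1-based), i.e. `m - l j.rev` (0-based). -/
def complP {N : ℕ} (m : ℕ) (l : Fin N → ℕ) : Fin N → ℕ :=
  fun j => m - l j.rev

/-- The natural embedding `Λ_N ↪ Λ_{N+1}` by appending a zero part. -/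
def extendP {N : ℕ} (l : Fin N → ℕ) : Fin (N + 1) → ℕ := Fin.snoc l 0

/-
The conjugate counts rows: `j < λ′ᵢ ↔ i ≤ λⱼ`. A horizontal strip adds at most one box to each
column, so `μ ⪯ λ` forces `λ′ᵢ ≤ μ′ᵢ + 2`. Conversely, the column condition says exactly that
`λⱼ₊₂ ≤ μⱼ`, and then `νⱼ = max μⱼ λⱼ₊₁` interlaces both with `λ` and with `μ`.
-/

theorem lt_conjP_iff {N : ℕ} (m : ℕ) {l : Fin N → ℕ} (hl : IsPartition l) (i : Fin m)
    (j : Fin N) : (j : ℕ) < conjP m l i ↔ (i : ℕ) + 1 ≤ l j := by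
  constructor
  · intro hj
    by_contra hij
    have hsub : univ.filter (fun k : Fin N => (i : ℕ) + 1 ≤ l k) ⊆ Iio j := by
      intro k hk
      rw [mem_filter] at hk
      rw [mem_Iio]
      by_contra! hjk
      exact hij (hk.2.trans (hl j k hjk))
    have := card_le_card hsub
    rw [Fin.card_Iio] at this
    exact absurd hj (not_lt.mpr this)
  · intro hij
    have hsub : Iic j ⊆ univ.filter (fun k : Fin N => (i : ℕ) + 1 ≤ l k) := fun k hk =>
      mem_filter.mpr ⟨mem_univ k, hij.trans (hl k j (mem_Iic.mp hk))⟩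
    have := card_le_card hsub
    rw [Fin.card_Iic] at this
    exact this

theorem conjP_le {N : ℕ} (m : ℕ) (l : Fin N → ℕ) (i : Fin m) : conjP m l i ≤ N :=
  (card_filter_le _ _).trans (card_fin N).le

theorem HStrip.conjP_le_add_one {N : ℕ} {m : ℕ} {l ν : Fin N → ℕ} (hs : HStrip l ν)
    (hl : IsPartition l) (hν : IsPartition ν) (i : Fin m) :
    conjP m l i ≤ conjP m ν i + 1 := by
  by_contra! h
  set c := conjP m ν i
  have hc : c + 1 < N := h.trans_le (conjP_le m l i)
  have hl' : (i : ℕ) + 1 ≤ l ⟨c + 1, hc⟩ := (lt_conjP_iff m hl i _).mp h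
  have hν' : (c : ℕ) < c := (lt_conjP_iff m hν i ⟨c, by omega⟩).mpr (hl'.trans (hs.2 c hc))
  exact lt_irrefl c hν'

theorem conjP_le_add_two_of_preceq {N : ℕ} (m : ℕ) {μ l : Fin N → ℕ} (hμ : IsPartition μ)
    (hl : IsPartition l) (h : preceq μ l) (i : Fin m) : conjP m l i ≤ conjP m μ i + 2 := by
  obtain ⟨ν, hν, -, -, hlν, hνμ⟩ := h
  have := hlν.conjP_le_add_one hl hν i
  have := hνμ.conjP_le_add_one hν hμ i
  omega

theorem apply_add_two_le_of_conjP_le_add_two {N : ℕ} (m : ℕ) {μ l : Fin N → ℕ} (hμ : IsPartition μ)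
    (hl : IsPartition l) (hlm : ∀ j, l j ≤ m)
    (hconj : ∀ i : Fin m, conjP m l i ≤ conjP m μ i + 2) (j : ℕ) (hj : j + 2 < N) :
    l ⟨j + 2, hj⟩ ≤ μ ⟨j, by omega⟩ := by
  by_contra! h
  let i : Fin m := ⟨μ ⟨j, by omega⟩, h.trans_le (hlm _)⟩
  have hl' : j + 2 < conjP m l i := (lt_conjP_iff m hl i ⟨j + 2, hj⟩).mpr h
  have hμ' : ¬ j < conjP m μ i := by
    rw [lt_conjP_iff m hμ i ⟨j, by omega⟩]
    exact Nat.not_succ_le_self _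
  have := hconj i
  omega

def nextPart {N : ℕ} (l : Fin N → ℕ) (j : Fin N) : ℕ :=
  if h : (j : ℕ) + 1 < N then l ⟨j + 1, h⟩ else 0

theorem nextPart_le_apply {N : ℕ} {l : Fin N → ℕ} (hl : IsPartition l) (j : Fin N) :
    nextPart l j ≤ l j := by
  unfold nextPart
  split_ifs with h
  · exact hl j _ (Fin.mk_le_mk.mpr (Nat.le_succ _))
  · exact Nat.zero_le _

theorem IsPartition.nextPart {N : ℕ} {l : Fin N → ℕ} (hl : IsPartition l) :
    IsPartition (nextPart l) := by
  intro j k hjk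
  unfold _root_.nextPart
  split_ifs with hk hj hj
  · exact hl _ _ (Fin.mk_le_mk.mpr (Nat.succ_le_succ hjk))
  · omega
  · exact Nat.zero_le _
  · exact le_rfl

theorem preceq_of_subDiag_of_apply_add_two_le {N : ℕ} {μ l : Fin N → ℕ} (hμ : IsPartition μ)
    (hl : IsPartition l) (hμl : SubDiag μ l)
    (htwo : ∀ (j : ℕ) (hj : j + 2 < N), l ⟨j + 2, hj⟩ ≤ μ ⟨j, by omega⟩) : preceq μ l := by
  have hν_le : ∀ j, max (μ j) (nextPart l j) ≤ l j := fun j =>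
    max_le (hμl j) (nextPart_le_apply hl j)
  refine ⟨fun j => max (μ j) (nextPart l j), Antitone.max hμ hl.nextPart,
    fun j => le_max_left _ _, hν_le, ⟨hν_le, fun j hj => ?_⟩, ⟨fun j => le_max_left _ _,
    fun j hj => max_le (hμ _ _ (Fin.mk_le_mk.mpr (Nat.le_succ j))) ?_⟩⟩
  · have : nextPart l ⟨j, by omega⟩ = l ⟨j + 1, hj⟩ := dif_pos hj
    exact this ▸ le_max_right _ _
  · unfold nextPart
    split_ifs with h
    · exact htwo j h
    · exact Nat.zero_le _

theorem statement6_general {N : ℕ} (m : ℕ) (mu lam : Fin N → ℕ) (hmu : IsPartition mu)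
    (hlam : IsPartition lam) (hlamb : ∀ j, lam j ≤ m) :
    preceq mu lam ↔
      (SubDiag mu lam ∧ ∀ i : Fin m, conjP m lam i ≤ conjP m mu i + 2) := by
  constructor
  · intro h
    refine ⟨?_, conjP_le_add_two_of_preceq m hmu hlam h⟩
    obtain ⟨ν, -, hμν, hνl, -, -⟩ := h
    exact fun j => (hμν j).trans (hνl j)
  · rintro ⟨hsub, hconj⟩
    exact preceq_of_subDiag_of_apply_add_two_le hmu hlam hsub
      (apply_add_two_le_of_conjP_le_add_two m hmu hlam hlamb hconj)

/-- For partitions `μ, λ ∈ Λ_N` with all parts `≤ m`, `μ ⪯ λ` iff `μ ⊂ λ`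
and `λ′_i ≤ μ′_i + 2` for all `1 ≤ i ≤ m`, where `λ′, μ′ ∈ Λ_m` are the conjugates. -/
theorem statement6 {N : ℕ} (m : ℕ) (mu lam : Fin N → ℕ) (hmu : IsPartition mu)
    (hlam : IsPartition lam) (hlamb : ∀ j, lam j ≤ m) (hmub : ∀ j, mu j ≤ m) :
    preceq mu lam ↔
      (SubDiag mu lam ∧ ∀ i : Fin m, conjP m lam i ≤ conjP m mu i + 2) :=
  statement6_general m mu lam hmu hlam hlamb
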